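/- Let X be a square-integrable random vector in R^n, and for m = 1,...,M let V_m = g_m(U_hat_m) and W_m = g_m(U_m) be square-integrable R^n-valued random vectors such that each W_m is uncorrelated with X, with all V_{m'}, and with W_{m'} for m' ≠ m. Define Z = h(X) - Σ_m S_m (V_m - W_m). Then gains (S_1,...,S_M) minimize tr(Cov(Z)) if and only if for each m: Σ_{m'} S_{m'} Cov(V_{m'}, V_m) + S_m Cov(W_m) = Cov(h(X), V_m); equivalently, the row vector of gains times the M×M block matrix with diagonal blocks Cov(V_m)+Cov(W_m) and off-diagonal blocks Cov(V_{m'}, V_m) equals the row of cross-covariances Cov(h(X), V_m). -/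

import Mathlib

/-!
With `Y_m = V_m - W_m`, the total variate is `Z_S = h(X) - Σ_m S_m Y_m`, and
`tr Cov(Z_{S+D}) = tr Cov(Z_S) - 2 Σ_m tr (Cov(Z_S, Y_m) D_mᵀ) + tr Cov(Σ_m D_m Y_m)`.
The last term is nonnegative and quadratic in `D`, so `S` is a minimizer iff the linear term
vanishes for every `D`, i.e. iff `Cov(Z_S, Y_m) = 0` for all `m` (the orthogonality principle).
The uncorrelation assumptions on the `W_m` turn `Cov(Z_S, Y_m)` into
`Cov(h(X), V_m) - Σ_{m'} S_{m'} Cov(V_{m'}, V_m) - S_m Cov(W_m)`.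
-/

open MeasureTheory Matrix Finset

noncomputable def cov {Ω : Type*} [MeasurableSpace Ω] (μ : Measure Ω)
    {a b : Type*} [Fintype a] [Fintype b]
    (A : Ω → a → ℝ) (B : Ω → b → ℝ) : Matrix a b ℝ :=
  Matrix.of fun i j =>
    ∫ ω, (A ω i - ∫ ω', A ω' i ∂μ) * (B ω j - ∫ ω', B ω' j ∂μ) ∂μ

open ProbabilityTheory

section CovarianceMatrix

variable {Ω : Type*} [MeasurableSpace Ω] {μ : Measure Ω} {a b c : Type*}
  [Fintype a] [Fintype b] [Fintype c]

lemma cov_apply (A : Ω → a → ℝ) (B : Ω → b → ℝ) (i : a) (j : b) :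
    cov μ A B i j = covariance (fun ω => A ω i) (fun ω => B ω j) μ := rfl

lemma transpose_cov (A : Ω → a → ℝ) (B : Ω → b → ℝ) : (cov μ A B)ᵀ = cov μ B A := by
  ext i j
  exact covariance_comm _ _

lemma trace_cov_self_nonneg (A : Ω → a → ℝ) : 0 ≤ (cov μ A A).trace :=
  Finset.sum_nonneg fun _ _ => integral_nonneg fun _ => mul_self_nonneg _

lemma cov_smul_left (t : ℝ) (A : Ω → a → ℝ) (B : Ω → b → ℝ) :
    cov μ (fun ω => t • A ω) B = t • cov μ A B := by
  ext i j
  exact covariance_const_mul_left t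

lemma cov_smul_right (t : ℝ) (A : Ω → a → ℝ) (B : Ω → b → ℝ) :
    cov μ A (fun ω => t • B ω) = t • cov μ A B := by
  rw [← transpose_cov, cov_smul_left, transpose_smul, transpose_cov]

lemma MeasureTheory.MemLp.const_mulVec {p : ENNReal} {A : Ω → b → ℝ} (T : Matrix a b ℝ)
    (hA : MemLp A p μ) : MemLp (fun ω => T *ᵥ A ω) p μ :=
  (Matrix.mulVecLin T).toContinuousLinearMap.comp_memLp' hA

variable [IsFiniteMeasure μ]

lemma cov_sub_left {A B : Ω → a → ℝ} {C : Ω → b → ℝ} (hA : MemLp A 2 μ) (hB : MemLp B 2 μ)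
    (hC : MemLp C 2 μ) : cov μ (fun ω => A ω - B ω) C = cov μ A C - cov μ B C := by
  ext i j
  exact covariance_fun_sub_left (hA.eval i) (hB.eval i) (hC.eval j)

lemma cov_sub_right {A : Ω → a → ℝ} {B C : Ω → b → ℝ} (hA : MemLp A 2 μ) (hB : MemLp B 2 μ)
    (hC : MemLp C 2 μ) : cov μ A (fun ω => B ω - C ω) = cov μ A B - cov μ A C := by
  rw [← transpose_cov, cov_sub_left hB hC hA, transpose_sub, transpose_cov, transpose_cov]

lemma cov_sum_left {κ : Type*} [Fintype κ] {F : κ → Ω → a → ℝ} {C : Ω → b → ℝ}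
    (hF : ∀ k, MemLp (F k) 2 μ) (hC : MemLp C 2 μ) :
    cov μ (fun ω => ∑ k, F k ω) C = ∑ k, cov μ (F k) C := by
  ext i j
  simp only [cov_apply, Finset.sum_apply, Matrix.sum_apply]
  exact covariance_fun_sum_left (fun k => (hF k).eval i) (hC.eval j)

lemma cov_mulVec_left (T : Matrix c a ℝ) {A : Ω → a → ℝ} {C : Ω → b → ℝ}
    (hA : MemLp A 2 μ) (hC : MemLp C 2 μ) :
    cov μ (fun ω => T *ᵥ A ω) C = T * cov μ A C := by
  ext i j
  simp only [cov_apply, mulVec, dotProduct, mul_apply]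
  rw [covariance_fun_sum_left (fun k => (hA.eval k).const_mul (T i k)) (hC.eval j)]
  simp only [covariance_const_mul_left]

lemma cov_mulVec_right (T : Matrix c b ℝ) {A : Ω → a → ℝ} {C : Ω → b → ℝ}
    (hA : MemLp A 2 μ) (hC : MemLp C 2 μ) :
    cov μ A (fun ω => T *ᵥ C ω) = cov μ A C * Tᵀ := by
  rw [← transpose_cov, cov_mulVec_left T hC hA, transpose_mul, transpose_cov]

lemma trace_cov_sub_self {A B : Ω → a → ℝ} (hA : MemLp A 2 μ) (hB : MemLp B 2 μ) :
    (cov μ (fun ω => A ω - B ω) (fun ω => A ω - B ω)).trace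
      = (cov μ A A).trace - 2 * (cov μ A B).trace + (cov μ B B).trace := by
  have hAB : MemLp (fun ω => A ω - B ω) 2 μ := hA.sub hB
  rw [cov_sub_left hA hB hAB, cov_sub_right hA hA hB, cov_sub_right hB hA hB,
    ← transpose_cov B A]
  simp only [trace_sub, trace_transpose]
  ring

end CovarianceMatrix

section ControlledVariate

variable {Ω a b c ι : Type*} [Fintype b] [Fintype ι]

def controlledVariate (A : Ω → a → ℝ) (Y : ι → Ω → b → ℝ) (S : ι → Matrix a b ℝ) :
    Ω → a → ℝ :=
  fun ω => A ω - ∑ k, S k *ᵥ Y k ω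

lemma controlledVariate_controlledVariate (A : Ω → a → ℝ) (Y : ι → Ω → b → ℝ)
    (S D : ι → Matrix a b ℝ) :
    controlledVariate (controlledVariate A Y S) Y D = controlledVariate A Y (S + D) := by
  ext ω : 1
  simp only [controlledVariate, Pi.add_apply, add_mulVec, Finset.sum_add_distrib]
  abel

lemma controlledVariate_single [DecidableEq ι] (A : Ω → a → ℝ) (Y : ι → Ω → b → ℝ) (k : ι)
    (T : Matrix a b ℝ) :
    controlledVariate A Y (Pi.single k T) = fun ω => A ω - T *ᵥ Y k ω := by
  ext ω : 1
  simp only [controlledVariate]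
  rw [Fintype.sum_eq_single k fun j hj => by rw [Pi.single_eq_of_ne hj, zero_mulVec],
    Pi.single_eq_same]

variable [MeasurableSpace Ω] {μ : Measure Ω} [Fintype a] [Fintype c]

lemma MeasureTheory.MemLp.controlledVariate {A : Ω → a → ℝ} {Y : ι → Ω → b → ℝ}
    (hA : MemLp A 2 μ) (hY : ∀ k, MemLp (Y k) 2 μ) (S : ι → Matrix a b ℝ) :
    MemLp (controlledVariate A Y S) 2 μ :=
  hA.sub (memLp_finsetSum _ fun k _ => (hY k).const_mulVec (S k))

variable [IsFiniteMeasure μ]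

lemma cov_controlledVariate_left {A : Ω → a → ℝ} {Y : ι → Ω → b → ℝ} {C : Ω → c → ℝ}
    (hA : MemLp A 2 μ) (hY : ∀ k, MemLp (Y k) 2 μ) (hC : MemLp C 2 μ)
    (S : ι → Matrix a b ℝ) :
    cov μ (controlledVariate A Y S) C = cov μ A C - ∑ k, S k * cov μ (Y k) C := by
  have hSY : ∀ k, MemLp (fun ω => S k *ᵥ Y k ω) 2 μ := fun k => (hY k).const_mulVec (S k)
  unfold controlledVariate
  rw [cov_sub_left hA (memLp_finsetSum _ fun k _ => hSY k) hC, cov_sum_left hSY hC]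
  simp only [cov_mulVec_left _ (hY _) hC]

lemma trace_cov_eq_zero_of_forall_le {R B : Ω → a → ℝ} (hR : MemLp R 2 μ) (hB : MemLp B 2 μ)
    (h : ∀ t : ℝ, (cov μ R R).trace ≤
      (cov μ (fun ω => R ω - t • B ω) (fun ω => R ω - t • B ω)).trace) :
    (cov μ R B).trace = 0 := by
  have hdisc : discrim (cov μ B B).trace (-2 * (cov μ R B).trace) 0 ≤ 0 := by
    refine discrim_le_zero fun t => ?_
    have ht := h t
    rw [trace_cov_sub_self (B := fun ω => t • B ω) hR (hB.const_smul t), cov_smul_right,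
      cov_smul_left, cov_smul_right] at ht
    simp only [trace_smul, smul_eq_mul] at ht
    linarith
  rw [discrim] at hdisc
  nlinarith [sq_nonneg (cov μ R B).trace]

theorem forall_trace_cov_le_iff_cov_eq_zero {A : Ω → a → ℝ} {Y : ι → Ω → b → ℝ}
    (hA : MemLp A 2 μ) (hY : ∀ k, MemLp (Y k) 2 μ) (S : ι → Matrix a b ℝ) :
    (∀ S' : ι → Matrix a b ℝ,
      (cov μ (controlledVariate A Y S) (controlledVariate A Y S)).trace ≤
        (cov μ (controlledVariate A Y S') (controlledVariate A Y S')).trace) ↔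
    ∀ k, cov μ (controlledVariate A Y S) (Y k) = 0 := by
  have hR : MemLp (controlledVariate A Y S) 2 μ := hA.controlledVariate hY S
  constructor
  · intro hmin k
    classical
    set E := cov μ (controlledVariate A Y S) (Y k)
    -- Moving only the `k`-th gain along `E` makes the linear coefficient `tr (E Eᵀ)`.
    have hEY : (cov μ (controlledVariate A Y S) (fun ω => E *ᵥ Y k ω)).trace = 0 := by
      refine trace_cov_eq_zero_of_forall_le hR ((hY k).const_mulVec E) fun t => ?_
      have := hmin (S + Pi.single k (t • E))
      rw [← controlledVariate_controlledVariate, controlledVariate_single] at this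
      simpa only [smul_mulVec] using this
    rw [cov_mulVec_right E hR (hY k), ← conjTranspose_eq_transpose_of_trivial] at hEY
    exact trace_mul_conjTranspose_self_eq_zero_iff.mp hEY
  · intro horth S'
    set R := controlledVariate A Y S
    set D := S' - S
    have hB : MemLp (fun ω => ∑ k, D k *ᵥ Y k ω) 2 μ :=
      memLp_finsetSum _ fun k _ => (hY k).const_mulVec (D k)
    have hRB : cov μ R (fun ω => ∑ k, D k *ᵥ Y k ω) = 0 := by
      rw [← transpose_cov, cov_sum_left (fun k => (hY k).const_mulVec (D k)) hR]
      simp only [cov_mulVec_left _ (hY _) hR, ← transpose_cov R, horth, Matrix.mul_zero,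
        Finset.sum_const_zero, transpose_zero]
    calc (cov μ R R).trace
        ≤ (cov μ R R).trace - 2 * (cov μ R (fun ω => ∑ k, D k *ᵥ Y k ω)).trace +
            (cov μ (fun ω => ∑ k, D k *ᵥ Y k ω) (fun ω => ∑ k, D k *ᵥ Y k ω)).trace := by
          rw [hRB, trace_zero, mul_zero, sub_zero]
          exact le_add_of_nonneg_right (trace_cov_self_nonneg _)
      _ = (cov μ (controlledVariate R Y D) (controlledVariate R Y D)).trace :=
          (trace_cov_sub_self hR hB).symm
      _ = (cov μ (controlledVariate A Y S') (controlledVariate A Y S')).trace := by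
          rw [controlledVariate_controlledVariate, add_sub_cancel]

end ControlledVariate

lemma cov_sub_sub_of_uncorrelated {Ω ι a : Type*} [MeasurableSpace Ω] {μ : Measure Ω}
    [IsFiniteMeasure μ] [Fintype a] [DecidableEq ι] {V W : ι → Ω → a → ℝ}
    (hV : ∀ k, MemLp (V k) 2 μ) (hW : ∀ k, MemLp (W k) 2 μ)
    (hWV : ∀ k l, cov μ (W k) (V l) = 0) (hWW : ∀ k l, k ≠ l → cov μ (W k) (W l) = 0)
    (k l : ι) :
    cov μ (fun ω => V k ω - W k ω) (fun ω => V l ω - W l ω) =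
      cov μ (V k) (V l) + if k = l then cov μ (W l) (W l) else 0 := by
  have hVW : MemLp (fun ω => V l ω - W l ω) 2 μ := (hV l).sub (hW l)
  rw [cov_sub_left (hV k) (hW k) hVW, cov_sub_right (hV k) (hV l) (hW l),
    cov_sub_right (hW k) (hV l) (hW l), ← transpose_cov (W l), hWV, hWV, transpose_zero]
  split_ifs with hkl
  · subst hkl
    abel
  · rw [hWW k l hkl]
    abel

theorem multi_control_variate_optimal_gain_general {Ω α : Type*} {M : ℕ}
    [MeasurableSpace Ω] (μ : Measure Ω) [IsProbabilityMeasure μ] {n : ℕ}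
    (X : Ω → α) (h : α → Fin n → ℝ)
    (V W : Fin M → Ω → Fin n → ℝ)
    (hL2 : MemLp (fun ω => h (X ω)) 2 μ)
    (hVL2 : ∀ m, MemLp (V m) 2 μ) (hWL2 : ∀ m, MemLp (W m) 2 μ)
    (hWX : ∀ m, cov μ (W m) (fun ω => h (X ω)) = 0)
    (hWV : ∀ m m', cov μ (W m) (V m') = 0)
    (hWW : ∀ m m', m ≠ m' → cov μ (W m) (W m') = 0)
    (Z : (Fin M → Matrix (Fin n) (Fin n) ℝ) → Ω → Fin n → ℝ)
    (hZ : ∀ S ω, Z S ω = h (X ω) - ∑ m, (S m).mulVec (V m ω - W m ω)) :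
    ∀ S : Fin M → Matrix (Fin n) (Fin n) ℝ,
      (∀ S' : Fin M → Matrix (Fin n) (Fin n) ℝ,
        (cov μ (Z S) (Z S)).trace ≤ (cov μ (Z S') (Z S')).trace) ↔
      (∀ m, (∑ m', S m' * cov μ (V m') (V m)) + S m * cov μ (W m) (W m) =
        cov μ (fun ω => h (X ω)) (V m)) := by
  intro S
  have hY : ∀ m, MemLp (fun ω => V m ω - W m ω) 2 μ := fun m => (hVL2 m).sub (hWL2 m)
  obtain rfl : Z = controlledVariate (fun ω => h (X ω)) fun m ω => V m ω - W m ω :=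
    funext₂ hZ
  rw [forall_trace_cov_le_iff_cov_eq_zero hL2 hY]
  refine forall_congr' fun m => ?_
  rw [cov_controlledVariate_left hL2 hY (hY m), cov_sub_right hL2 (hVL2 m) (hWL2 m),
    ← transpose_cov (W m), hWX, transpose_zero, sub_zero]
  simp only [cov_sub_sub_of_uncorrelated hVL2 hWL2 hWV hWW, Matrix.mul_add, mul_ite,
    mul_zero, Finset.sum_add_distrib, Finset.sum_ite_eq', Finset.mem_univ, if_true]
  rw [sub_eq_zero, eq_comm]

/-- multi-control-variate optimal gain condition.  With
`Z S = h(X) - Σ_m S_m (V_m - W_m)`, the gains `(S_1,…,S_M)` minimize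
`tr Cov(Z)` iff for every `m`:
`Σ_{m'} S_{m'} Cov(V_{m'}, V_m) + S_m Cov(W_m) = Cov(h(X), V_m)`. -/
theorem multi_control_variate_optimal_gain {Ω α : Type*} {M : ℕ} {β : Fin M → Type*}
    [MeasurableSpace Ω] (μ : Measure Ω) [IsProbabilityMeasure μ] {n : ℕ}
    (X : Ω → α) (h : α → Fin n → ℝ)
    (Uhat U : ∀ m : Fin M, Ω → β m) (g : ∀ m : Fin M, β m → Fin n → ℝ)
    (V W : Fin M → Ω → Fin n → ℝ)
    (hV : ∀ m ω, V m ω = g m (Uhat m ω)) (hW : ∀ m ω, W m ω = g m (U m ω))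
    (hL2 : MemLp (fun ω => h (X ω)) 2 μ)
    (hVL2 : ∀ m, MemLp (V m) 2 μ) (hWL2 : ∀ m, MemLp (W m) 2 μ)
    (hWX : ∀ m, cov μ (W m) (fun ω => h (X ω)) = 0)
    (hWV : ∀ m m', cov μ (W m) (V m') = 0)
    (hWW : ∀ m m', m ≠ m' → cov μ (W m) (W m') = 0)
    (Z : (Fin M → Matrix (Fin n) (Fin n) ℝ) → Ω → Fin n → ℝ)
    (hZ : ∀ S ω, Z S ω = h (X ω) - ∑ m, (S m).mulVec (V m ω - W m ω)) :
    ∀ S : Fin M → Matrix (Fin n) (Fin n) ℝ,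
      (∀ S' : Fin M → Matrix (Fin n) (Fin n) ℝ,
        (cov μ (Z S) (Z S)).trace ≤ (cov μ (Z S') (Z S')).trace) ↔
      (∀ m, (∑ m', S m' * cov μ (V m') (V m)) + S m * cov μ (W m) (W m) =
        cov μ (fun ω => h (X ω)) (V m)) :=
  multi_control_variate_optimal_gain_general μ X h V W hL2 hVL2 hWL2 hWX hWV hWW Z hZ
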